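/- For every ε ∈ (0,1) there exists a constant C(ε) > 0 such that the following holds. Let V be a finite set with |V| = n ≥ 2 and κ : V × V → ℝ symmetric with κ ≥ 0. For every family (x^t)_{t=1}^{n−1} of functions V × V → [0,1] feasible for LP-ultrametric, there exists a family (y^t)_{t=1}^{n−1} of functions V × V → {0,1} feasible for ILP-ultrametric such that Σ_{t=1}^{n−1} Σ_{ {i,j} ⊆ V, i≠j } κ(i,j) y^t(i,j) ≤ C(ε) · (log n) · Σ_{t=1}^{n−1} Σ_{ {i,j} ⊆ V, i≠j } κ(i,j) x^t(i,j). In particular, the optimum value of ILP-ultrametric is at most C(ε) log n times the optimum value of LP-ultrametric. -/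

import Mathlib

/-- A family `x^t : V × V → [0,1]` (`t = 1, …, n-1`) is feasible for LP-ultrametric:
each layer is symmetric with zero diagonal, `[0,1]`-valued, satisfies the triangle
constraints, the layers are nonincreasing in `t`, and each layer satisfies the
spreading constraints. -/
def LPUltraFeasible {V : Type*} [Fintype V] [DecidableEq V] (n : ℕ)
    (x : ℕ → V → V → ℝ) : Prop :=
  (∀ t ∈ Finset.Icc 1 (n - 1), ∀ i j : V, x t i j = x t j i) ∧
  (∀ t ∈ Finset.Icc 1 (n - 1), ∀ i : V, x t i i = 0) ∧
  (∀ t ∈ Finset.Icc 1 (n - 1), ∀ i j : V, 0 ≤ x t i j ∧ x t i j ≤ 1) ∧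
  (∀ t ∈ Finset.Icc 1 (n - 1), ∀ i j k : V, x t i k ≤ x t i j + x t j k) ∧
  (∀ t ∈ Finset.Icc 1 (n - 2), ∀ i j : V, x (t + 1) i j ≤ x t i j) ∧
  (∀ t ∈ Finset.Icc 1 (n - 1), ∀ S : Finset V, ∀ i ∈ S,
    (S.card : ℝ) - t ≤ ∑ j ∈ S, x t i j)

/-- A family `y^t : V × V → {0,1}` (`t = 1, …, n-1`) is feasible for ILP-ultrametric:
each layer is 0/1-valued, symmetric with zero diagonal, satisfies the triangle
constraints and the spreading constraints `Σ_{i,j ∈ S} y^t i j ≥ 2` for `|S| = t + 1`;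
moreover the layer constraints `y^t ≥ y^{t+1}` and the hereditary constraints hold. -/
def ILPUltraFeasible {V : Type*} [Fintype V] [DecidableEq V] (n : ℕ)
    (y : ℕ → V → V → ℝ) : Prop :=
  (∀ t ∈ Finset.Icc 1 (n - 1), ∀ i j : V, y t i j = 0 ∨ y t i j = 1) ∧
  (∀ t ∈ Finset.Icc 1 (n - 1), ∀ i j : V, y t i j = y t j i) ∧
  (∀ t ∈ Finset.Icc 1 (n - 1), ∀ i : V, y t i i = 0) ∧
  (∀ t ∈ Finset.Icc 1 (n - 1), ∀ i j k : V, y t i k ≤ y t i j + y t j k) ∧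
  (∀ t ∈ Finset.Icc 1 (n - 1), ∀ S : Finset V, S.card = t + 1 →
    (2 : ℝ) ≤ ∑ i ∈ S, ∑ j ∈ S, y t i j) ∧
  (∀ t ∈ Finset.Icc 1 (n - 2), ∀ i j : V, y (t + 1) i j ≤ y t i j) ∧
  (∀ t ∈ Finset.Icc 1 (n - 1), ∀ S : Finset V, S.card ≤ n - 1 →
    ∑ i ∈ S, ∑ j ∈ S, y S.card i j ≤
      (S.card : ℝ) * ((∑ i ∈ S, ∑ j ∈ S, y t i j) +
        ∑ i ∈ S, ∑ j ∈ Sᶜ, (1 - y t i j)))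

/-!
The LP solution is rounded by a random hierarchical decomposition of the LP ultrametric
`d = ∑ₜ xᵗ`, in the style of Calinescu–Karloff–Rabani. Fix a random order `σ` of `V` and a
random radius factor in `[1, 2)`; at scale `k` every point is sent to the `σ`-first point within
distance (factor)·`2ᵏ⁻¹` of it, and the level-`s` cluster of `i` consists of the points sharing
all of `i`'s centres at the scales `log₂ s - 2, …, n`. By the spreading constraints a ball of
radius `< 2ᵏ` has at most `2ᵏ⁺²` points, so level-`s` clusters have at most `s` points, and the
largest cluster of size at most `t` defines a feasible integral layer `yᵗ`. A pair `i, j` is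
cut at scale `k` only if the `σ`-first point `v` among those at least as close to `{i, j}` has
the radius between its distances to `i` and `j`; averaging over the order and the radius, scale
`k` contributes `O(Hₙ · d(i,j) / 2ᵏ)`, and it accounts for at most `8 · 2ᵏ` layers, so each
pair pays `O(log n) · d(i,j)` on average. Some order and radius do no worse than the average.
-/

open Finset

section FirstIn

variable {V α : Type*} [LinearOrder α]

noncomputable def firstIn (σ : V ≃ α) (T : Finset V) (hT : T.Nonempty) : V :=
  σ.symm ((T.image σ).min' (hT.image σ))

variable (σ : V ≃ α) {T : Finset V} (hT : T.Nonempty)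

theorem firstIn_mem : firstIn σ T hT ∈ T := by
  obtain ⟨v, hv, hσv⟩ := mem_image.1 ((T.image σ).min'_mem (hT.image σ))
  rwa [firstIn, ← hσv, σ.symm_apply_apply]

theorem apply_firstIn_le {w : V} (hw : w ∈ T) : σ (firstIn σ T hT) ≤ σ w := by
  rw [firstIn, σ.apply_symm_apply]
  exact min'_le _ _ (mem_image_of_mem σ hw)

theorem firstIn_eq {v : V} (hv : v ∈ T) (h : ∀ w ∈ T, σ v ≤ σ w) : firstIn σ T hT = v :=
  σ.injective <| le_antisymm (apply_firstIn_le σ hT hv) (h _ (firstIn_mem σ hT))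

theorem firstIn_swap_trans [DecidableEq V] {v v' : V} (hv : v ∈ T) (hv' : v' ∈ T) :
    firstIn ((Equiv.swap v v').trans σ) T hT = Equiv.swap v v' (firstIn σ T hT) := by
  have swap_mem : ∀ {w}, w ∈ T → Equiv.swap v v' w ∈ T := fun hw => by
    rw [Equiv.swap_apply_def]; split_ifs <;> assumption
  refine firstIn_eq _ hT (swap_mem (firstIn_mem σ hT)) fun w hw => ?_
  simpa using apply_firstIn_le σ hT (swap_mem hw)

end FirstIn

theorem card_mul_card_filter_forall_apply_le {V α : Type*} [Fintype V] [DecidableEq V]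
    [LinearOrder α] [Fintype α] {T : Finset V} {v : V} (hv : v ∈ T) :
    T.card * #{σ : V ≃ α | ∀ w ∈ T, σ v ≤ σ w} = Fintype.card (V ≃ α) := by
  have hT : T.Nonempty := ⟨v, hv⟩
  have filter_eq : ∀ v' ∈ T, #{σ : V ≃ α | ∀ w ∈ T, σ v' ≤ σ w} =
      #{σ : V ≃ α | firstIn σ T hT = v'} := fun v' hv' => by
    congr 1; ext σ
    simp only [mem_filter, mem_univ, true_and]
    exact ⟨firstIn_eq σ hT hv', fun h w hw => h ▸ apply_firstIn_le σ hT hw⟩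
  have card_fibre : ∀ v' ∈ T, #{σ : V ≃ α | firstIn σ T hT = v'} =
      #{σ : V ≃ α | firstIn σ T hT = v} := fun v' hv' => by
    refine card_bij' (fun σ _ => (Equiv.swap v' v).trans σ)
      (fun σ _ => (Equiv.swap v' v).trans σ) ?_ ?_ ?_ ?_
    · intro σ hσ
      simp only [mem_filter, mem_univ, true_and] at hσ ⊢
      rw [firstIn_swap_trans σ hT hv' hv, hσ, Equiv.swap_apply_left]
    · intro σ hσ
      simp only [mem_filter, mem_univ, true_and] at hσ ⊢
      rw [firstIn_swap_trans σ hT hv' hv, hσ, Equiv.swap_apply_right]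
    all_goals intro σ _; ext; simp
  rw [filter_eq v hv, ← card_univ,
    card_eq_sum_card_fiberwise (s := univ) (fun σ _ => firstIn_mem σ hT),
    sum_congr rfl card_fibre, sum_const, smul_eq_mul]

theorem sum_ite_forall_apply_le_eq {V α : Type*} [Fintype V] [DecidableEq V]
    [LinearOrder α] [Fintype α] {T : Finset V} {v : V} (hv : v ∈ T) :
    ∑ σ : V ≃ α, (if ∀ w ∈ T, σ v ≤ σ w then (1 : ℝ) else 0) =
      Fintype.card (V ≃ α) * (#T : ℝ)⁻¹ := by
  have hT : (#T : ℝ) ≠ 0 := by exact_mod_cast (card_pos.2 ⟨v, hv⟩).ne'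
  rw [← natCast_card_filter, ← card_mul_card_filter_forall_apply_le hv]
  push_cast
  rw [mul_comm, inv_mul_cancel_left₀ hT]

section Center

variable {V α : Type*} [Fintype V] [LinearOrder α] (σ : V ≃ α) (d : V → V → ℝ) {r : ℝ}

noncomputable def center (r : ℝ) (u : V) : V :=
  if h : ({v | d v u ≤ r} : Finset V).Nonempty then firstIn σ _ h else u

variable {u : V} (hu : d u u ≤ r)
include hu

theorem dist_center_le : d (center σ d r u) u ≤ r := by
  have h : ({v | d v u ≤ r} : Finset V).Nonempty := ⟨u, by simpa using hu⟩
  rw [center, dif_pos h]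
  simpa using firstIn_mem σ h

theorem center_eq {v : V} (hv : d v u ≤ r) (hmin : ∀ w, d w u ≤ r → σ v ≤ σ w) :
    center σ d r u = v := by
  have h : ({v | d v u ≤ r} : Finset V).Nonempty := ⟨u, by simpa using hu⟩
  rw [center, dif_pos h]
  exact firstIn_eq σ h (by simpa using hv) fun w hw => hmin w (by simpa using hw)

omit hu

theorem exists_forall_le_of_center_ne {i j : V} (hi : d i i ≤ r) (hj : d j j ≤ r)
    (hne : center σ d r i ≠ center σ d r j) :
    ∃ v, min (d v i) (d v j) ≤ r ∧ r < max (d v i) (d v j) ∧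
      ∀ w, min (d w i) (d w j) ≤ min (d v i) (d v j) → σ v ≤ σ w := by
  have hT : ({w | min (d w i) (d w j) ≤ r} : Finset V).Nonempty :=
    ⟨i, by simpa using Or.inl hi⟩
  set v := firstIn σ _ hT
  have hv : min (d v i) (d v j) ≤ r := (mem_filter.1 (firstIn_mem σ hT)).2
  have first : ∀ w, min (d w i) (d w j) ≤ r → σ v ≤ σ w := fun w hw =>
    apply_firstIn_le σ hT (mem_filter.2 ⟨mem_univ w, hw⟩)
  refine ⟨v, hv, ?_, fun w hw => first w (hw.trans hv)⟩
  by_contra! hvr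
  refine hne ((center_eq σ d hi ((le_max_left _ _).trans hvr) fun w hw => ?_).trans
    (center_eq σ d hj ((le_max_right _ _).trans hvr) fun w hw => ?_).symm)
  · exact first w ((min_le_left _ _).trans hw)
  · exact first w ((min_le_right _ _).trans hw)

theorem ite_center_eq_le_sum [DecidableEq V] {i j : V} (hi : d i i ≤ r) (hj : d j j ≤ r) :
    (if center σ d r i = center σ d r j then 0 else 1 : ℝ) ≤
      ∑ v, (if min (d v i) (d v j) ≤ r ∧ r < max (d v i) (d v j) then 1 else 0) *
        (if ∀ w ∈ ({w | min (d w i) (d w j) ≤ min (d v i) (d v j)} : Finset V), σ v ≤ σ w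
          then 1 else 0) := by
  split_ifs with h
  · exact sum_nonneg fun v _ => by split_ifs <;> norm_num
  obtain ⟨v, hvr, hrv, hfirst⟩ := exists_forall_le_of_center_ne σ d hi hj h
  refine single_le_sum (fun v _ => by split_ifs <;> norm_num) (mem_univ v) |>.trans' ?_
  rw [if_pos ⟨hvr, hrv⟩, one_mul, if_pos]
  exact fun w hw => hfirst w (mem_filter.1 hw).2

end Center

theorem sum_inv_card_filter_le_le_harmonic {V β : Type*} [DecidableEq V] [LinearOrder β]
    (f : V → β) (S : Finset V) :
    ∑ v ∈ S, ((#{w ∈ S | f w ≤ f v} : ℕ) : ℝ)⁻¹ ≤ harmonic S.card := by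
  induction S using Finset.induction_on_max_value f with
  | empty => simp
  | insert a s ha hmax ih =>
    have top : {w ∈ insert a s | f w ≤ f a} = insert a s :=
      filter_true_of_mem fun w hw => (mem_insert.1 hw).elim (fun h => h ▸ le_rfl) (hmax w)
    have rest : ∀ v ∈ s, ((#{w ∈ insert a s | f w ≤ f v} : ℕ) : ℝ)⁻¹ ≤
        ((#{w ∈ s | f w ≤ f v} : ℕ) : ℝ)⁻¹ := fun v hv => by
      have hpos : 0 < #{w ∈ s | f w ≤ f v} := card_pos.2 ⟨v, mem_filter.2 ⟨hv, le_rfl⟩⟩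
      gcongr
      exact subset_insert a s
    rw [sum_insert ha, top, card_insert_of_notMem ha, harmonic_succ]
    push_cast
    linarith [sum_le_sum rest]

theorem card_mul_le_of_forall_add_mul_le (s : Finset ℕ) {c δ α β : ℝ} (hδ : 0 < δ)
    (h : ∀ m ∈ s, α ≤ c + m * δ ∧ c + m * δ ≤ β) : s.card * δ ≤ max 0 (β - α) + δ := by
  rcases s.eq_empty_or_nonempty with rfl | hs
  · simpa using add_nonneg (le_max_left 0 (β - α)) hδ.le
  have hle : s.min' hs ≤ s.max' hs := s.min'_le _ (s.max'_mem hs)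
  have hcard : (s.card : ℝ) ≤ s.max' hs - s.min' hs + 1 := by
    have : s.card ≤ s.max' hs + 1 - s.min' hs := by
      simpa using card_le_card fun m hm => mem_Icc.2 ⟨s.min'_le m hm, s.le_max' m hm⟩
    have := (Nat.cast_le (α := ℝ)).2 this
    rw [Nat.cast_sub (by omega)] at this
    push_cast at this
    linarith
  have := (h _ (s.min'_mem hs)).1
  have := (h _ (s.max'_mem hs)).2
  nlinarith [le_max_right 0 (β - α)]

/-- At scale `k` the radius is uniform on a grid of `M` points of `[2ᵏ⁻¹, 2ᵏ)`, `m < M`. -/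
noncomputable def radius (M m k : ℕ) : ℝ := (1 + m / M) * 2 ^ k / 2

theorem radius_nonneg (M m k : ℕ) : 0 ≤ radius M m k := by
  unfold radius; positivity

theorem radius_lt {M m : ℕ} (hm : m < M) (k : ℕ) : radius M m k < 2 ^ k := by
  have : (m : ℝ) / M < 1 := (div_lt_one (by norm_cast; omega)).2 (by exact_mod_cast hm)
  unfold radius; nlinarith [pow_pos (two_pos (α := ℝ)) k]

theorem pow_mul_card_filter_radius_le {M : ℕ} (hM : 0 < M) (k : ℕ) (a b : ℝ) :
    2 ^ k * #{m ∈ range M | a ≤ radius M m k ∧ radius M m k < b} ≤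
      2 * M * max 0 (min b (2 ^ k) - max a (2 ^ k / 2)) + 2 ^ k := by
  set s := {m ∈ range M | a ≤ radius M m k ∧ radius M m k < b}
  have hM' : (0 : ℝ) < M := by exact_mod_cast hM
  have hδ : (0 : ℝ) < 2 ^ k / (2 * M) := by positivity
  have hr : ∀ m, radius M m k = 2 ^ k / 2 + m * (2 ^ k / (2 * M)) := fun m => by
    unfold radius; field_simp
  have key := card_mul_le_of_forall_add_mul_le s hδ (α := max a (2 ^ k / 2)) (β := min b (2 ^ k))
    fun m hm => by
      simp only [s, mem_filter, mem_range] at hm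
      rw [← hr]
      refine ⟨max_le hm.2.1 ?_, le_min hm.2.2.le (radius_lt hm.1 k).le⟩
      rw [hr]
      linarith [mul_nonneg (Nat.cast_nonneg m) hδ.le]
  calc (2 : ℝ) ^ k * s.card = 2 * M * (s.card * (2 ^ k / (2 * M))) := by field_simp
    _ ≤ 2 * M * (max 0 (min b (2 ^ k) - max a (2 ^ k / 2)) + 2 ^ k / (2 * M)) := by gcongr
    _ = _ := by field_simp

theorem sum_range_max_sub_le {a b : ℝ} (hab : a ≤ b) (N : ℕ) :
    ∑ k ∈ range N, max 0 (min b (2 ^ k) - max a (2 ^ k / 2)) ≤ b - a := by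
  set F : ℕ → ℝ := fun k => max a (min b (2 ^ k / 2))
  have step : ∀ k, max 0 (min b (2 ^ k) - max a (2 ^ k / 2)) ≤ F (k + 1) - F k := fun k => by
    have hl : (2 : ℝ) ^ k / 2 ≤ 2 ^ k := by linarith [pow_pos (two_pos (α := ℝ)) k]
    have hF : F (k + 1) = max a (min b (2 ^ k)) := by simp [F, pow_succ]
    rw [hF]
    have h1 : F k ≤ max a (min b (2 ^ k)) := max_le_max_left a (min_le_min_left b hl)
    have h2 : F k ≤ max a (2 ^ k / 2) := max_le_max_left a (min_le_right b _)
    exact max_le (by linarith) (by linarith [le_max_right a (min b (2 ^ k))])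
  calc _ ≤ ∑ k ∈ range N, (F (k + 1) - F k) := sum_le_sum fun k _ => step k
    _ = F N - F 0 := sum_range_sub F N
    _ ≤ b - a := sub_le_sub (max_le hab (min_le_left _ _)) (le_max_left _ _)

theorem sum_pow_mul_card_filter_radius_le {M : ℕ} (hM : 0 < M) {a b : ℝ} (hab : a ≤ b)
    (N : ℕ) :
    ∑ k ∈ range N, 2 ^ k * (#{m ∈ range M | a ≤ radius M m k ∧ radius M m k < b} : ℝ) ≤
      2 * M * (b - a) + 2 ^ N := by
  have geom : ∑ k ∈ range N, (2 : ℝ) ^ k ≤ 2 ^ N := by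
    rw [geom_sum_eq (by norm_num)]; norm_num
  calc _ ≤ ∑ k ∈ range N, (2 * M * max 0 (min b (2 ^ k) - max a (2 ^ k / 2)) + 2 ^ k) :=
        sum_le_sum fun k _ => pow_mul_card_filter_radius_le hM k a b
    _ ≤ 2 * M * (b - a) + 2 ^ N := by
        rw [sum_add_distrib, ← mul_sum]
        gcongr
        exact sum_range_max_sub_le hab N

theorem sum_sum_sum_pow_mul_center_ne_le {V α : Type*} [Fintype V] [DecidableEq V]
    [LinearOrder α] [Fintype α] (d : V → V → ℝ) {i j : V} (hi : d i i = 0) (hj : d j j = 0)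
    {D : ℝ} (hD : ∀ v, |d v i - d v j| ≤ D) {M : ℕ} (hM : 0 < M) (N : ℕ) :
    ∑ σ : V ≃ α, ∑ m ∈ range M, ∑ k ∈ range N, (2 : ℝ) ^ k *
        (if center σ d (radius M m k) i = center σ d (radius M m k) j then 0 else 1) ≤
      Fintype.card (V ≃ α) * (2 * M * D + 2 ^ N) * harmonic (Fintype.card V) := by
  set a : V → ℝ := fun v => min (d v i) (d v j)
  set T : V → Finset V := fun v => {w | a w ≤ a v}
  set P : ℕ → ℕ → V → Prop := fun m k v =>
    a v ≤ radius M m k ∧ radius M m k < max (d v i) (d v j)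
  set Q : (V ≃ α) → V → Prop := fun σ v => ∀ w ∈ T v, σ v ≤ σ w
  have hB : 0 ≤ 2 * M * D + 2 ^ N := by
    have := (abs_nonneg _).trans (hD i); positivity
  have hQ : ∀ v, ∑ σ : V ≃ α, (if Q σ v then (1 : ℝ) else 0) =
      Fintype.card (V ≃ α) * (#(T v) : ℝ)⁻¹ := fun v =>
    sum_ite_forall_apply_le_eq (mem_filter.2 ⟨mem_univ v, le_rfl⟩)
  have hP : ∀ v, ∑ k ∈ range N, 2 ^ k * ∑ m ∈ range M, (if P m k v then (1 : ℝ) else 0) ≤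
      2 * M * D + 2 ^ N := fun v => by
    simp only [← natCast_card_filter]
    refine (sum_pow_mul_card_filter_radius_le hM min_le_max N).trans ?_
    rw [max_sub_min_eq_abs']
    gcongr
    exact hD v
  calc ∑ σ : V ≃ α, ∑ m ∈ range M, ∑ k ∈ range N, (2 : ℝ) ^ k *
        (if center σ d (radius M m k) i = center σ d (radius M m k) j then 0 else 1)
      ≤ ∑ σ : V ≃ α, ∑ m ∈ range M, ∑ k ∈ range N, ∑ v,
          2 ^ k * ((if P m k v then 1 else 0) * (if Q σ v then 1 else 0)) := by
        simp only [← mul_sum]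
        gcongr with σ _ m _ k _
        exact ite_center_eq_le_sum σ d (hi.trans_le (radius_nonneg M m k))
          (hj.trans_le (radius_nonneg M m k))
    _ = ∑ v, (∑ k ∈ range N, 2 ^ k * ∑ m ∈ range M, (if P m k v then 1 else 0)) *
          ∑ σ : V ≃ α, (if Q σ v then 1 else 0) := by
        simp only [mul_sum, sum_mul, mul_assoc]
        rw [sum_comm]; simp_rw [sum_comm (s := (univ : Finset (V ≃ α)))]
        rw [sum_comm]; simp_rw [sum_comm (s := range M)]
        exact sum_comm
    _ ≤ ∑ v, (2 * M * D + 2 ^ N) * (Fintype.card (V ≃ α) * (#(T v) : ℝ)⁻¹) :=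
        sum_le_sum fun v _ => mul_le_mul (hP v) (hQ v).le
          (sum_nonneg fun σ _ => by split_ifs <;> norm_num) hB
    _ ≤ Fintype.card (V ≃ α) * (2 * M * D + 2 ^ N) * harmonic (Fintype.card V) := by
        rw [← mul_sum, ← mul_sum, ← mul_assoc, mul_comm (2 * M * D + 2 ^ N : ℝ)]
        exact mul_le_mul_of_nonneg_left (sum_inv_card_filter_le_le_harmonic a univ)
          (mul_nonneg (Nat.cast_nonneg _) hB)

structure Hierarchy (V : Type*) (n : ℕ) where
  cluster : ℕ → V → Finset V
  mem_cluster_self : ∀ s i, i ∈ cluster s i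
  cluster_eq_of_mem : ∀ {s i j}, j ∈ cluster s i → cluster s j = cluster s i
  cluster_mono : ∀ {s s'} i, s ≤ s' → cluster s i ⊆ cluster s' i
  card_cluster_le : ∀ {s} i, 1 ≤ s → s ≤ n - 1 → (cluster s i).card ≤ s

namespace Hierarchy

variable {V : Type*} {n : ℕ} (H : Hierarchy V n)

def levelIndex (t : ℕ) (i : V) : ℕ :=
  Nat.findGreatest (fun s => (H.cluster s i).card ≤ t) (n - 1)

/-- The largest cluster of `i` with at most `t` points; using it rather than the level-`t`
cluster itself is what makes the hereditary constraints hold. -/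
def level (t : ℕ) (i : V) : Finset V := H.cluster (H.levelIndex t i) i

theorem mem_level_self (t : ℕ) (i : V) : i ∈ H.level t i := H.mem_cluster_self _ i

theorem level_mono {t t' : ℕ} (htt' : t ≤ t') (i : V) : H.level t i ⊆ H.level t' i :=
  H.cluster_mono i (Nat.findGreatest_mono_left (fun _ hs => hs.trans htt') _)

theorem level_subset_level_card (t : ℕ) (i : V) :
    H.level t i ⊆ H.level (H.level t i).card i :=
  H.cluster_mono i (Nat.le_findGreatest (Nat.findGreatest_le _) le_rfl)

section

variable {t : ℕ} (ht : t ∈ Icc 1 (n - 1))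
include ht

theorem le_levelIndex (i : V) : t ≤ H.levelIndex t i :=
  Nat.le_findGreatest (mem_Icc.1 ht).2
    (H.card_cluster_le i (mem_Icc.1 ht).1 (mem_Icc.1 ht).2)

theorem card_level_le (i : V) : (H.level t i).card ≤ t :=
  Nat.findGreatest_spec (P := fun s => (H.cluster s i).card ≤ t) (mem_Icc.1 ht).2
    (H.card_cluster_le i (mem_Icc.1 ht).1 (mem_Icc.1 ht).2)

theorem cluster_subset_level (i : V) : H.cluster t i ⊆ H.level t i :=
  H.cluster_mono i (H.le_levelIndex ht i)

theorem levelIndex_le_of_mem {i j : V} (hj : j ∈ H.level t i) :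
    H.levelIndex t i ≤ H.levelIndex t j :=
  Nat.le_findGreatest (Nat.findGreatest_le _)
    (by rw [H.cluster_eq_of_mem hj]; exact H.card_level_le ht i)

theorem level_eq_of_mem {i j : V} (hj : j ∈ H.level t i) : H.level t j = H.level t i := by
  have hij := H.levelIndex_le_of_mem ht hj
  have hi : i ∈ H.level t j := H.cluster_mono j hij
    (H.cluster_eq_of_mem hj ▸ H.mem_cluster_self _ i)
  unfold level
  rw [le_antisymm (H.levelIndex_le_of_mem ht hi) hij]
  exact H.cluster_eq_of_mem hj

theorem mem_level_comm {i j : V} : j ∈ H.level t i ↔ i ∈ H.level t j :=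
  ⟨fun h => H.level_eq_of_mem ht h ▸ H.mem_level_self t i,
    fun h => H.level_eq_of_mem ht h ▸ H.mem_level_self t j⟩

end

variable [DecidableEq V]

def toILP (t : ℕ) (i j : V) : ℝ := if j ∈ H.level t i then 0 else 1

theorem toILP_nonneg (t : ℕ) (i j : V) : 0 ≤ H.toILP t i j := by
  unfold toILP; split_ifs <;> norm_num

theorem toILP_le_one (t : ℕ) (i j : V) : H.toILP t i j ≤ 1 := by
  unfold toILP; split_ifs <;> norm_num

theorem toILP_le_toILP_of_level_subset {t t' : ℕ} {i : V} (h : H.level t i ⊆ H.level t' i)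
    (j : V) : H.toILP t' i j ≤ H.toILP t i j := by
  by_cases hj : j ∈ H.level t i
  · simp [toILP, hj, h hj]
  · simpa [toILP, hj] using H.toILP_le_one t' i j

theorem sum_toILP_card_le [Fintype V] (t : ℕ) (S : Finset V) (i : V) :
    ∑ j ∈ S, H.toILP S.card i j ≤
      ∑ j ∈ S, H.toILP t i j + S.card * ∑ j ∈ Sᶜ, (1 - H.toILP t i j) := by
  have hB : 0 ≤ ∑ j ∈ Sᶜ, (1 - H.toILP t i j) :=
    sum_nonneg fun j _ => by linarith [H.toILP_le_one t i j]
  by_cases hsub : H.level t i ⊆ S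
  · have hlev : H.level t i ⊆ H.level S.card i :=
      (H.level_subset_level_card t i).trans (H.level_mono (card_le_card hsub) i)
    linarith [sum_le_sum fun j (_ : j ∈ S) => H.toILP_le_toILP_of_level_subset hlev j,
      mul_nonneg (Nat.cast_nonneg S.card) hB]
  · obtain ⟨j₀, hj₀, hj₀S⟩ := not_subset.1 hsub
    have h1 : ∑ j ∈ S, H.toILP S.card i j ≤ S.card := by
      simpa using sum_le_sum fun j (_ : j ∈ S) => H.toILP_le_one S.card i j
    have h2 : 1 ≤ ∑ j ∈ Sᶜ, (1 - H.toILP t i j) := by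
      simpa [toILP, hj₀] using single_le_sum (f := fun j => 1 - H.toILP t i j)
        (fun j _ => by linarith [H.toILP_le_one t i j]) (mem_compl.2 hj₀S)
    nlinarith [sum_nonneg fun j (_ : j ∈ S) => H.toILP_nonneg t i j]

theorem sum_sum_toILP_card_le [Fintype V] (t : ℕ) (S : Finset V) :
    ∑ i ∈ S, ∑ j ∈ S, H.toILP S.card i j ≤
      S.card * ((∑ i ∈ S, ∑ j ∈ S, H.toILP t i j) +
        ∑ i ∈ S, ∑ j ∈ Sᶜ, (1 - H.toILP t i j)) := by
  rcases S.eq_empty_or_nonempty with rfl | hS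
  · simp
  have hc : (1 : ℝ) ≤ S.card := by exact_mod_cast hS.card_pos
  have hA : 0 ≤ ∑ i ∈ S, ∑ j ∈ S, H.toILP t i j :=
    sum_nonneg fun i _ => sum_nonneg fun j _ => H.toILP_nonneg t i j
  calc _ ≤ ∑ i ∈ S, (∑ j ∈ S, H.toILP t i j + S.card * ∑ j ∈ Sᶜ, (1 - H.toILP t i j)) :=
        sum_le_sum fun i _ => H.sum_toILP_card_le t S i
    _ = (∑ i ∈ S, ∑ j ∈ S, H.toILP t i j) +
          S.card * ∑ i ∈ S, ∑ j ∈ Sᶜ, (1 - H.toILP t i j) := by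
        rw [sum_add_distrib, mul_sum]
    _ ≤ _ := by nlinarith

section

variable {t : ℕ} (ht : t ∈ Icc 1 (n - 1))
include ht

theorem toILP_triangle (i j k : V) : H.toILP t i k ≤ H.toILP t i j + H.toILP t j k := by
  by_cases hij : j ∈ H.level t i
  · by_cases hjk : k ∈ H.level t j
    · have hik : k ∈ H.level t i := H.level_eq_of_mem ht hij ▸ hjk
      simp [toILP, hij, hjk, hik]
    · linarith [H.toILP_le_one t i k, H.toILP_nonneg t i j,
        show H.toILP t j k = 1 by simp [toILP, hjk]]
  · linarith [H.toILP_le_one t i k, H.toILP_nonneg t j k,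
      show H.toILP t i j = 1 by simp [toILP, hij]]

theorem two_le_sum_toILP {S : Finset V} (hS : S.card = t + 1) :
    2 ≤ ∑ i ∈ S, ∑ j ∈ S, H.toILP t i j := by
  obtain ⟨i, hi⟩ := card_pos.1 (by omega : 0 < S.card)
  obtain ⟨j, hjS, hj⟩ := not_subset.1 fun hsub : S ⊆ H.level t i =>
    ((card_le_card hsub).trans (H.card_level_le ht i)).not_gt (by omega)
  have hij : i ≠ j := fun h => hj (h ▸ H.mem_level_self t i)
  have row : ∀ a ∈ S, ∀ b ∈ S, H.toILP t a b ≤ ∑ c ∈ S, H.toILP t a c := fun a _ b hb =>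
    single_le_sum (fun c _ => H.toILP_nonneg t a c) hb
  calc (2 : ℝ) = H.toILP t i j + H.toILP t j i := by
        simp [toILP, hj, (H.mem_level_comm ht).not.1 hj]; norm_num
    _ ≤ ∑ c ∈ S, H.toILP t i c + ∑ c ∈ S, H.toILP t j c :=
        add_le_add (row i hi j hjS) (row j hjS i hi)
    _ = ∑ a ∈ {i, j}, ∑ c ∈ S, H.toILP t a c :=
        (sum_pair (f := fun a => ∑ c ∈ S, H.toILP t a c) hij).symm
    _ ≤ ∑ a ∈ S, ∑ c ∈ S, H.toILP t a c :=
        sum_le_sum_of_subset_of_nonneg (insert_subset hi (singleton_subset_iff.2 hjS))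
          fun a _ _ => sum_nonneg fun c _ => H.toILP_nonneg t a c

end

theorem toILP_feasible [Fintype V] : ILPUltraFeasible n H.toILP := by
  refine ⟨fun t _ i j => ?_, fun t ht i j => ?_, fun t _ i => ?_,
    fun t ht i j k => H.toILP_triangle ht i j k, fun t ht S hS => H.two_le_sum_toILP ht hS,
    fun t _ i j => H.toILP_le_toILP_of_level_subset (H.level_mono t.le_succ i) j,
    fun t _ S _ => H.sum_sum_toILP_card_le t S⟩
  · unfold toILP; split_ifs <;> simp
  · exact if_congr (H.mem_level_comm ht) rfl rfl
  · simp [toILP, H.mem_level_self]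

theorem sum_toILP_le_card (i j : V) :
    ∑ t ∈ Icc 1 (n - 1), H.toILP t i j ≤ #{t ∈ Icc 1 (n - 1) | j ∉ H.cluster t i} := by
  rw [natCast_card_filter]
  refine sum_le_sum fun t ht => ?_
  by_cases hj : j ∈ H.cluster t i
  · simp [toILP, hj, H.cluster_subset_level ht i hj]
  · simpa [hj] using H.toILP_le_one t i j

end Hierarchy

section LPDist

variable {V : Type*} {n : ℕ} {x : ℕ → V → V → ℝ}

def lpDist (n : ℕ) (x : ℕ → V → V → ℝ) (i j : V) : ℝ := ∑ t ∈ Icc 1 (n - 1), x t i j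

variable [Fintype V] [DecidableEq V]

theorem lpDist_nonneg (hx : LPUltraFeasible n x) (i j : V) : 0 ≤ lpDist n x i j :=
  sum_nonneg fun t ht => (hx.2.2.1 t ht i j).1

theorem lpDist_self (hx : LPUltraFeasible n x) (i : V) : lpDist n x i i = 0 :=
  sum_eq_zero fun t ht => hx.2.1 t ht i

theorem abs_lpDist_sub_le (hx : LPUltraFeasible n x) (i j v : V) :
    |lpDist n x v i - lpDist n x v j| ≤ lpDist n x i j := by
  have tri : ∀ a b c, lpDist n x a c ≤ lpDist n x a b + lpDist n x b c := fun a b c => by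
    rw [lpDist, lpDist, lpDist, ← sum_add_distrib]
    exact sum_le_sum fun t ht => hx.2.2.2.1 t ht a b c
  have comm : lpDist n x j i = lpDist n x i j := sum_congr rfl fun t ht => hx.1 t ht j i
  rw [abs_sub_le_iff]
  constructor <;> linarith [tri v j i, tri v i j]

theorem layer_le_of_le (hx : LPUltraFeasible n x) {s t : ℕ} (hs : 1 ≤ s) (hst : s ≤ t)
    (ht : t ≤ n - 1) (i j : V) : x t i j ≤ x s i j := by
  induction t, hst using Nat.le_induction with
  | base => exact le_rfl
  | succ t hst ih =>
    exact (hx.2.2.2.2.1 t (mem_Icc.2 ⟨hs.trans hst, by omega⟩) i j).trans (ih (by omega))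

theorem mul_layer_le_lpDist (hx : LPUltraFeasible n x) {t : ℕ} (ht : t ∈ Icc 1 (n - 1))
    (i j : V) : t * x t i j ≤ lpDist n x i j := by
  obtain ⟨ht1, htn⟩ := mem_Icc.1 ht
  calc t * x t i j = ∑ _s ∈ Icc 1 t, x t i j := by simp
    _ ≤ ∑ s ∈ Icc 1 t, x s i j :=
        sum_le_sum fun s hs => layer_le_of_le hx (mem_Icc.1 hs).1 (mem_Icc.1 hs).2 htn i j
    _ ≤ lpDist n x i j :=
        sum_le_sum_of_subset_of_nonneg (Icc_subset_Icc_right htn)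
          fun s hs _ => (hx.2.2.1 s hs i j).1

theorem one_le_lpDist (hx : LPUltraFeasible n x) (hcard : Fintype.card V = n) (h2 : 2 ≤ n)
    {i j : V} (hij : i ≠ j) : 1 ≤ lpDist n x i j := by
  have h1 : 1 ∈ Icc 1 (n - 1) := mem_Icc.2 ⟨le_rfl, by omega⟩
  have hj : j ∈ univ.erase i := mem_erase.2 ⟨hij.symm, mem_univ j⟩
  have spread := hx.2.2.2.2.2 1 h1 univ i (mem_univ i)
  have rest : ∑ w ∈ (univ.erase i).erase j, x 1 i w ≤ ((univ.erase i).erase j).card := by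
    simpa using sum_le_sum fun w (_ : w ∈ (univ.erase i).erase j) => (hx.2.2.1 1 h1 i w).2
  rw [← add_sum_erase _ _ (mem_univ i), hx.2.1 1 h1 i, zero_add,
    ← add_sum_erase _ _ hj] at spread
  rw [card_erase_of_mem hj, card_erase_of_mem (mem_univ i), card_univ, hcard] at rest
  rw [card_univ, hcard, Nat.cast_one] at spread
  push_cast [show 2 ≤ n from h2, Nat.sub_sub] at rest
  have : x 1 i j ≤ lpDist n x i j := single_le_sum (fun t ht => (hx.2.2.1 t ht i j).1) h1
  linarith

theorem card_filter_lpDist_le (hx : LPUltraFeasible n x) {τ : ℕ} (hτ : τ ∈ Icc 1 (n - 1))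
    {R : ℝ} (hR : 2 * R ≤ τ) (v : V) : #{w | lpDist n x v w ≤ R} ≤ 2 * τ := by
  set B : Finset V := {w | lpDist n x v w ≤ R}
  have hτ0 : (0 : ℝ) < τ := by exact_mod_cast (mem_Icc.1 hτ).1
  have small : ∀ w ∈ B, x τ v w ≤ 1 / 2 := fun w hw => by
    have := (mul_layer_le_lpDist hx hτ v w).trans (mem_filter.1 hw).2
    rw [le_div_iff₀ two_pos]; nlinarith
  rcases B.eq_empty_or_nonempty with hB | ⟨w, hw⟩
  · simp [hB]
  have hv : v ∈ B := mem_filter.2 ⟨mem_univ v, by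
    rw [lpDist_self hx]; linarith [lpDist_nonneg hx v w, (mem_filter.1 hw).2]⟩
  have := (hx.2.2.2.2.2 τ hτ B v hv).trans (sum_le_sum small)
  rw [sum_const, nsmul_eq_mul] at this
  exact_mod_cast (by linarith : (B.card : ℝ) ≤ 2 * τ)

end LPDist

section ScaleCluster

variable {V : Type*} [Fintype V] [DecidableEq V]

def scaleCluster (n : ℕ) (c : ℕ → V → V) (s : ℕ) (i : V) : Finset V :=
  {w | ∀ k, Nat.log 2 s - 2 ≤ k → k ≤ n → c k w = c k i}

variable {n : ℕ} {c : ℕ → V → V}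

theorem mem_scaleCluster {s : ℕ} {i w : V} :
    w ∈ scaleCluster n c s i ↔ ∀ k, Nat.log 2 s - 2 ≤ k → k ≤ n → c k w = c k i := by
  simp [scaleCluster]

theorem mem_scaleCluster_self (s : ℕ) (i : V) : i ∈ scaleCluster n c s i :=
  mem_scaleCluster.2 fun _ _ _ => rfl

theorem scaleCluster_eq_of_mem {s : ℕ} {i j : V} (hj : j ∈ scaleCluster n c s i) :
    scaleCluster n c s j = scaleCluster n c s i := by
  ext w
  simp only [mem_scaleCluster] at hj ⊢
  exact ⟨fun hw k hk hkn => (hw k hk hkn).trans (hj k hk hkn),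
    fun hw k hk hkn => (hw k hk hkn).trans (hj k hk hkn).symm⟩

theorem scaleCluster_mono {s s' : ℕ} (i : V) (hss' : s ≤ s') :
    scaleCluster n c s i ⊆ scaleCluster n c s' i := fun _ hw =>
  mem_scaleCluster.2 fun k hk => mem_scaleCluster.1 hw k
    ((Nat.sub_le_sub_right (Nat.log_mono_right hss') 2).trans hk)

theorem card_filter_log_sub_two_le (N k : ℕ) :
    #{t ∈ Icc 1 N | Nat.log 2 t - 2 ≤ k} ≤ 8 * 2 ^ k := by
  calc #{t ∈ Icc 1 N | Nat.log 2 t - 2 ≤ k} ≤ #(Ico 1 (2 ^ (k + 3))) := by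
        refine card_le_card fun t ht => ?_
        obtain ⟨ht, hk⟩ := mem_filter.1 ht
        have ht1 := (mem_Icc.1 ht).1
        exact mem_Ico.2 ⟨ht1, (Nat.log_lt_iff_lt_pow one_lt_two (by omega)).1 (by omega)⟩
    _ ≤ 8 * 2 ^ k := by rw [Nat.card_Ico, pow_add]; omega

theorem card_filter_not_mem_scaleCluster_le (i j : V) :
    (#{t ∈ Icc 1 (n - 1) | j ∉ scaleCluster n c t i} : ℝ) ≤
      8 * ∑ k ∈ range (n + 1), 2 ^ k * (if c k i = c k j then 0 else 1) := by
  set δ : ℕ → ℝ := fun k => if c k i = c k j then 0 else 1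
  set f : ℕ → ℕ → ℝ := fun t k => (if Nat.log 2 t - 2 ≤ k then 1 else 0) * δ k
  have hf : ∀ t k, 0 ≤ f t k := fun t k => by simp only [f, δ]; split_ifs <;> norm_num
  calc (#{t ∈ Icc 1 (n - 1) | j ∉ scaleCluster n c t i} : ℝ)
      ≤ ∑ t ∈ Icc 1 (n - 1), ∑ k ∈ range (n + 1), f t k := by
        rw [natCast_card_filter]
        refine sum_le_sum fun t _ => ?_
        split_ifs with ht
        · exact sum_nonneg fun k _ => hf t k
        · obtain ⟨k, hk, hkn, hne⟩ : ∃ k, Nat.log 2 t - 2 ≤ k ∧ k ≤ n ∧ c k j ≠ c k i := by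
            simpa [mem_scaleCluster] using ht
          refine le_trans ?_
            (single_le_sum (fun k _ => hf t k) (mem_range.2 (Nat.lt_succ_of_le hkn)))
          simp only [f, δ, if_pos hk, if_neg (Ne.symm hne), le_refl, one_mul]
    _ = ∑ k ∈ range (n + 1), (#{t ∈ Icc 1 (n - 1) | Nat.log 2 t - 2 ≤ k} : ℝ) * δ k := by
        rw [sum_comm]
        simp only [f, ← sum_mul, natCast_card_filter]
    _ ≤ ∑ k ∈ range (n + 1), (8 * 2 ^ k) * δ k := by
        refine sum_le_sum fun k _ => mul_le_mul_of_nonneg_right ?_ ?_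
        · exact_mod_cast card_filter_log_sub_two_le (n - 1) k
        · simp only [δ]; split_ifs <;> norm_num
    _ = 8 * ∑ k ∈ range (n + 1), 2 ^ k * δ k := by rw [mul_sum]; simp only [mul_assoc]

end ScaleCluster

theorem eight_mul_harmonic_le {n : ℕ} (h2 : 2 ≤ n) {ρ : ℝ} (hρ : 1 ≤ ρ) :
    8 * (2 * ρ + 1) * harmonic n ≤ 60 * Real.log n * ρ := by
  have hH : (harmonic n : ℝ) ≤ 1 + Real.log n := harmonic_le_one_add_log n
  have hL : 0.6931471803 < Real.log n :=
    Real.log_two_gt_d9.trans_le (Real.log_le_log two_pos (by exact_mod_cast h2))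
  have hH0 : (0 : ℝ) ≤ harmonic n := by exact_mod_cast (harmonic_pos (by omega)).le
  nlinarith

theorem exists_sum_objective_le {Ω V : Type*} [Fintype Ω] [Nonempty Ω] [Fintype V]
    (T : Finset ℕ) {κ : V → V → ℝ} (hκ : ∀ i j, 0 ≤ κ i j) (y : Ω → ℕ → V → V → ℝ)
    (x : ℕ → V → V → ℝ) (C : ℝ)
    (h : ∀ i j, ∑ ω, ∑ t ∈ T, y ω t i j ≤ Fintype.card Ω * (C * ∑ t ∈ T, x t i j)) :
    ∃ ω, ∑ t ∈ T, (1 / 2) * ∑ i, ∑ j, κ i j * y ω t i j ≤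
      C * ∑ t ∈ T, (1 / 2) * ∑ i, ∑ j, κ i j * x t i j := by
  have obj : ∀ z : ℕ → V → V → ℝ, ∑ t ∈ T, (1 / 2) * ∑ i, ∑ j, κ i j * z t i j =
      (1 / 2) * ∑ i, ∑ j, κ i j * ∑ t ∈ T, z t i j := fun z => by
    simp only [mul_sum]
    rw [sum_comm]; simp_rw [sum_comm (s := T)]
  suffices hsum : ∑ ω, ∑ t ∈ T, (1 / 2) * ∑ i, ∑ j, κ i j * y ω t i j ≤
      ∑ _ω : Ω, C * ∑ t ∈ T, (1 / 2) * ∑ i, ∑ j, κ i j * x t i j by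
    obtain ⟨ω, -, hω⟩ := exists_le_of_sum_le univ_nonempty hsum
    exact ⟨ω, hω⟩
  calc ∑ ω, ∑ t ∈ T, (1 / 2) * ∑ i, ∑ j, κ i j * y ω t i j
      = (1 / 2) * ∑ i, ∑ j, κ i j * ∑ ω, ∑ t ∈ T, y ω t i j := by
        rw [sum_congr rfl fun ω _ => obj (y ω)]
        simp only [mul_sum]
        rw [sum_comm]
        refine sum_congr rfl fun i _ => ?_
        rw [sum_comm]
    _ ≤ (1 / 2) * ∑ i, ∑ j, κ i j * (Fintype.card Ω * (C * ∑ t ∈ T, x t i j)) := by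
        gcongr with i _ j _
        · exact hκ i j
        · exact h i j
    _ = ∑ _ω : Ω, C * ∑ t ∈ T, (1 / 2) * ∑ i, ∑ j, κ i j * x t i j := by
        rw [sum_const, card_univ, nsmul_eq_mul, obj]
        simp only [mul_sum]
        exact sum_congr rfl fun i _ => sum_congr rfl fun j _ =>
          sum_congr rfl fun t _ => by ring

section Rounding

variable {V α : Type*} [Fintype V] [DecidableEq V] [LinearOrder α] {n : ℕ}
  {x : ℕ → V → V → ℝ}

theorem card_scaleCluster_center_le (hx : LPUltraFeasible n x) (hcard : Fintype.card V = n)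
    (h2 : 2 ≤ n) (σ : V ≃ α) {M m : ℕ} (hm : m < M) {s : ℕ} (i : V) (hs : 1 ≤ s)
    (hsn : s ≤ n - 1) :
    #(scaleCluster n (fun k => center σ (lpDist n x) (radius M m k)) s i) ≤ s := by
  set k := Nat.log 2 s - 2
  set c₀ := center σ (lpDist n x) (radius M m k) i
  have hsub : scaleCluster n (fun k => center σ (lpDist n x) (radius M m k)) s i ⊆
      ({w | lpDist n x c₀ w ≤ radius M m k} : Finset V) := fun w hw => by
    have hkn : k ≤ n := (Nat.sub_le _ _).trans ((Nat.log_le_self 2 s).trans (by omega))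
    have hc : center σ (lpDist n x) (radius M m k) w = c₀ :=
      mem_scaleCluster.1 hw k le_rfl hkn
    rw [mem_filter, ← hc]
    exact ⟨mem_univ w, dist_center_le σ _ ((lpDist_self hx w).trans_le (radius_nonneg M m k))⟩
  refine (card_le_card hsub).trans ?_
  by_cases hs4 : s < 4
  -- Scale `0` has radius `< 1`, and distinct points are at distance `≥ 1`.
  · have hk : k = 0 := by
      have : Nat.log 2 s < 2 := (Nat.log_lt_iff_lt_pow one_lt_two (by omega)).2 (by simpa)
      omega
    refine (card_le_card fun w hw => mem_singleton.2 ?_).trans (card_singleton c₀).le |>.trans hs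
    by_contra hne
    have := (one_le_lpDist hx hcard h2 (Ne.symm hne)).trans (mem_filter.1 hw).2
    linarith [radius_lt hm k, show (2 : ℝ) ^ k = 1 by rw [hk]; norm_num]
  · have hlog : k + 2 = Nat.log 2 s := by
      have : 2 ≤ Nat.log 2 s := (Nat.le_log_iff_pow_le one_lt_two (by omega)).2 (by omega)
      omega
    have hpow : 2 ^ (k + 2) ≤ s := hlog ▸ Nat.pow_log_le_self 2 (by omega)
    have hτ : 2 ^ (k + 1) ∈ Icc 1 (n - 1) :=
      mem_Icc.2 ⟨Nat.one_le_two_pow, by rw [pow_succ] at hpow ⊢; omega⟩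
    have hR : 2 * radius M m k ≤ ((2 ^ (k + 1) : ℕ) : ℝ) := by
      push_cast; linarith [radius_lt hm k, pow_succ (2 : ℝ) k]
    exact (card_filter_lpDist_le hx hτ hR c₀).trans (by rw [pow_succ _ (k + 1)] at hpow; omega)

noncomputable def lpHierarchy (hx : LPUltraFeasible n x) (hcard : Fintype.card V = n)
    (h2 : 2 ≤ n) (σ : V ≃ α) {M : ℕ} (m : Fin M) : Hierarchy V n where
  cluster := scaleCluster n fun k => center σ (lpDist n x) (radius M m k)
  mem_cluster_self := mem_scaleCluster_self
  cluster_eq_of_mem := scaleCluster_eq_of_mem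
  cluster_mono := scaleCluster_mono
  card_cluster_le := card_scaleCluster_center_le hx hcard h2 σ m.2

theorem sum_sum_sum_toILP_lpHierarchy_le [Fintype α] (hx : LPUltraFeasible n x)
    (hcard : Fintype.card V = n) (h2 : 2 ≤ n) (i j : V) :
    ∑ σ : V ≃ α, ∑ m : Fin (2 ^ (n + 1)), ∑ t ∈ Icc 1 (n - 1),
        (lpHierarchy hx hcard h2 σ m).toILP t i j ≤
      Fintype.card (V ≃ α) * 2 ^ (n + 1) * (60 * Real.log n * lpDist n x i j) := by
  rcases eq_or_ne i j with rfl | hij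
  · simp [Hierarchy.toILP, Hierarchy.mem_level_self, lpDist_self hx]
  set M := 2 ^ (n + 1)
  have hρ := one_le_lpDist hx hcard h2 hij
  calc ∑ σ : V ≃ α, ∑ m : Fin M, ∑ t ∈ Icc 1 (n - 1),
        (lpHierarchy hx hcard h2 σ m).toILP t i j
      ≤ ∑ σ : V ≃ α, ∑ m : Fin M, 8 * ∑ k ∈ range (n + 1), (2 : ℝ) ^ k *
          (if center σ (lpDist n x) (radius M m k) i = center σ (lpDist n x) (radius M m k) j
            then 0 else 1) :=
        sum_le_sum fun σ _ => sum_le_sum fun m _ =>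
          ((lpHierarchy hx hcard h2 σ m).sum_toILP_le_card i j).trans
            (card_filter_not_mem_scaleCluster_le i j)
    _ = 8 * ∑ σ : V ≃ α, ∑ m ∈ range M, ∑ k ∈ range (n + 1), (2 : ℝ) ^ k *
          (if center σ (lpDist n x) (radius M m k) i = center σ (lpDist n x) (radius M m k) j
            then 0 else 1) := by
        simp only [mul_sum, Finset.sum_range]
    _ ≤ 8 * (Fintype.card (V ≃ α) * (2 * M * lpDist n x i j + 2 ^ (n + 1)) *
          harmonic (Fintype.card V)) :=
        mul_le_mul_of_nonneg_left (sum_sum_sum_pow_mul_center_ne_le _ (lpDist_self hx i)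
          (lpDist_self hx j) (abs_lpDist_sub_le hx i j) (by positivity) (n + 1)) (by norm_num)
    _ = Fintype.card (V ≃ α) * M * (8 * (2 * lpDist n x i j + 1) * harmonic n) := by
        rw [hcard]; push_cast [M]; ring
    _ ≤ Fintype.card (V ≃ α) * 2 ^ (n + 1) * (60 * Real.log n * lpDist n x i j) := by
        push_cast [M]
        exact mul_le_mul_of_nonneg_left (eight_mul_harmonic_le h2 hρ) (by positivity)

end Rounding

theorem statement12_general :
    ∃ C : ℝ, 0 < C ∧
      ∀ (V : Type) [Fintype V] [DecidableEq V], ∀ (n : ℕ) (κ : V → V → ℝ)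
        (x : ℕ → V → V → ℝ),
        Fintype.card V = n → 2 ≤ n →
        (∀ i j : V, κ i j = κ j i) → (∀ i j : V, 0 ≤ κ i j) →
        LPUltraFeasible n x →
        ∃ y : ℕ → V → V → ℝ, ILPUltraFeasible n y ∧
          ∑ t ∈ Finset.Icc 1 (n - 1), (1 / 2) * ∑ i : V, ∑ j : V, κ i j * y t i j ≤
            C * Real.log n *
              ∑ t ∈ Finset.Icc 1 (n - 1), (1 / 2) * ∑ i : V, ∑ j : V, κ i j * x t i j := by
  refine ⟨60, by norm_num, fun V _ _ n κ x hcard h2 _ hκ hx => ?_⟩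
  let Ω := (V ≃ Fin (Fintype.card V)) × Fin (2 ^ (n + 1))
  have : Nonempty Ω := ⟨(Fintype.equivFin V, ⟨0, by positivity⟩)⟩
  obtain ⟨ω, hω⟩ := exists_sum_objective_le (Icc 1 (n - 1)) hκ
    (fun ω : Ω => (lpHierarchy hx hcard h2 ω.1 ω.2).toILP) x (60 * Real.log n) fun i j => by
      rw [Fintype.sum_prod_type, Fintype.card_prod, Fintype.card_fin]
      push_cast
      exact sum_sum_sum_toILP_lpHierarchy_le hx hcard h2 i j
  exact ⟨_, (lpHierarchy hx hcard h2 ω.1 ω.2).toILP_feasible, hω⟩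

/-- Rounding theorem: for every `ε ∈ (0,1)` there is a constant `C(ε) > 0` such that
for every finite `V` with `|V| = n ≥ 2`, every symmetric nonnegative `κ`, and every
feasible solution `(x^t)` of LP-ultrametric, there is a feasible solution `(y^t)` of
ILP-ultrametric whose objective value is at most `C(ε) · log n` times that of `(x^t)`. -/
theorem statement12 (ε : ℝ) (hε0 : 0 < ε) (hε1 : ε < 1) :
    ∃ C : ℝ, 0 < C ∧
      ∀ (V : Type) [Fintype V] [DecidableEq V], ∀ (n : ℕ) (κ : V → V → ℝ)
        (x : ℕ → V → V → ℝ),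
        Fintype.card V = n → 2 ≤ n →
        (∀ i j : V, κ i j = κ j i) → (∀ i j : V, 0 ≤ κ i j) →
        LPUltraFeasible n x →
        ∃ y : ℕ → V → V → ℝ, ILPUltraFeasible n y ∧
          ∑ t ∈ Finset.Icc 1 (n - 1), (1 / 2) * ∑ i : V, ∑ j : V, κ i j * y t i j ≤
            C * Real.log n *
              ∑ t ∈ Finset.Icc 1 (n - 1), (1 / 2) * ∑ i : V, ∑ j : V, κ i j * x t i j :=
  statement12_general
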